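/- arXiv:1701.03944 — 2 statements merged into one kernel-verified Lean document; each statement's English description precedes it below -/
import Mathlib

section
/- Let m, n ≥ 4, let L' be a non-returning regular language of state complexity m over an alphabet Σ', and let L be a non-returning regular language of state complexity n over an alphabet Σ. Then the concatenation L'·L, regarded as a language over Σ' ∪ Σ, has state complexity at most m·2^{n-1} + 1. -/
/-- Left quotient of a language by a word. -/
def leftQuot {γ : Type} (L : Set (List γ)) (w : List γ) : Set (List γ) := {x | w ++ x ∈ L}

/-- The set of left quotients of `L` by words over the alphabet `A`. -/
def quotientsOn {γ : Type} (A : Set γ) (L : Set (List γ)) : Set (Set (List γ)) :=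
  {K | ∃ w : List γ, (∀ x ∈ w, x ∈ A) ∧ K = leftQuot L w}

/-- `L` is non-returning over the alphabet `A`: no quotient by a nonempty word
over `A` equals `L`. -/
def NonReturningOn {γ : Type} (A : Set γ) (L : Set (List γ)) : Prop :=
  ∀ w : List γ, w ≠ [] → (∀ x ∈ w, x ∈ A) → leftQuot L w ≠ L

/-- Concatenation (product) of two languages. -/
def concat {γ : Type} (L1 L2 : Set (List γ)) : Set (List γ) :=
  {w | ∃ u v, u ∈ L1 ∧ v ∈ L2 ∧ w = u ++ v}

lemma leftQuot_nil {γ : Type} (L : Set (List γ)) : leftQuot L [] = L := by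
  ext x; simp [leftQuot]

lemma ncard_subsets {α : Type} {s : Set α} (hs : s.Finite) :
    {t | t ⊆ s}.ncard = 2 ^ s.ncard := by
  haveI := hs.fintype
  rw [← Nat.card_coe_set_eq, ← Nat.card_coe_set_eq]
  have h1 : Nat.card ↥{t | t ⊆ s} = Nat.card (Set ↥s) :=
    Nat.card_congr (Equiv.Set.powerset s)
  rw [h1, Nat.card_eq_fintype_card, Nat.card_eq_fintype_card, Fintype.card_set]

/-- If `L'` is a non-returning language of state complexity `m` over the alphabet `Σ'`
and `L` is a non-returning language of state complexity `n` over `Σ` (`m, n ≥ 4`), then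
the product `L'·L`, regarded as a language over `Σ' ∪ Σ`, has state complexity at most
`m·2^{n-1} + 1`. -/
theorem stmt15 {γ : Type} (m n : ℕ) (hm : 4 ≤ m) (hn : 4 ≤ n)
    (A B : Set γ) (L' L : Set (List γ))
    (hL'A : ∀ w ∈ L', ∀ x ∈ w, x ∈ A) (hLB : ∀ w ∈ L, ∀ x ∈ w, x ∈ B)
    (hNR' : NonReturningOn A L') (hNR : NonReturningOn B L)
    (hm' : Nat.card (quotientsOn A L') = m) (hn' : Nat.card (quotientsOn B L) = n) :
    Nat.card (quotientsOn (A ∪ B) (concat L' L)) ≤ m * 2 ^ (n - 1) + 1 := by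
  classical
  rw [Nat.card_coe_set_eq] at hm' hn' ⊢
  -- Finiteness of the two quotient sets
  have hQ'fin : (quotientsOn A L').Finite := by
    by_contra h
    rw [(show (quotientsOn A L').Infinite from h).ncard] at hm'; omega
  have hQfin : (quotientsOn B L).Finite := by
    by_contra h
    rw [(show (quotientsOn B L).Infinite from h).ncard] at hn'; omega
  -- nonemptiness of L' and L
  have hL'ne : L'.Nonempty := by
    rcases Set.eq_empty_or_nonempty L' with h | h
    · exfalso
      have : quotientsOn A L' = {∅} := by
        ext K
        constructor
        · rintro ⟨w, -, rfl⟩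
          have : leftQuot L' w = ∅ := by ext x; simp [leftQuot, h]
          simp [this]
        · rintro rfl
          exact ⟨[], by simp, by rw [leftQuot_nil, h]⟩
      rw [this, Set.ncard_singleton] at hm'; omega
    · exact h
  have hLne : L.Nonempty := by
    rcases Set.eq_empty_or_nonempty L with h | h
    · exfalso
      have : quotientsOn B L = {∅} := by
        ext K
        constructor
        · rintro ⟨w, -, rfl⟩
          have : leftQuot L w = ∅ := by ext x; simp [leftQuot, h]
          simp [this]
        · rintro rfl
          exact ⟨[], by simp, by rw [leftQuot_nil, h]⟩
      rw [this, Set.ncard_singleton] at hn'; omega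
    · exact h
  -- quotients by words containing a letter outside the alphabet are empty
  have hA : ∀ w : List γ, ¬ (∀ x ∈ w, x ∈ A) → leftQuot L' w = ∅ := by
    intro w hw
    ext x
    simp only [Set.mem_empty_iff_false, iff_false]
    intro hx
    exact hw fun a ha => hL'A _ hx a (List.mem_append_left _ ha)
  have hB : ∀ w : List γ, ¬ (∀ x ∈ w, x ∈ B) → leftQuot L w = ∅ := by
    intro w hw
    ext x
    simp only [Set.mem_empty_iff_false, iff_false]
    intro hx
    exact hw fun a ha => hLB _ hx a (List.mem_append_left _ ha)
  have hL'mem : L' ∈ quotientsOn A L' := ⟨[], by simp, (leftQuot_nil L').symm⟩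
  have hLmem : L ∈ quotientsOn B L := ⟨[], by simp, (leftQuot_nil L).symm⟩
  -- the "initial" second component
  set S₀ : Set (Set (List γ)) := {K | [] ∈ L' ∧ K = L} with hS₀
  -- the set of pairs
  set P : Set (Set (List γ) × Set (Set (List γ))) :=
    {p | (p.1 = L' ∧ p.2 = S₀) ∨
      (p.1 ∈ insert ∅ (quotientsOn A L') ∧ p.1 ≠ L' ∧ p.2 ⊆ quotientsOn B L ∧
        (L ∈ p.2 ↔ [] ∈ p.1))} with hP
  set F : Set (List γ) × Set (Set (List γ)) → Set (List γ) :=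
    fun p => concat p.1 L ∪ ⋃₀ p.2 with hF
  -- Step 1: every quotient of the concatenation is F of a pair in P
  have hstep1 : quotientsOn (A ∪ B) (concat L' L) ⊆ F '' P := by
    rintro K ⟨w, hw, rfl⟩
    set Sw : Set (Set (List γ)) :=
      {K | K.Nonempty ∧ ∃ u z, u ∈ L' ∧ w = u ++ z ∧ K = leftQuot L z} with hSw
    refine ⟨(leftQuot L' w, Sw), ?_, ?_⟩
    · -- membership in P
      by_cases hq : leftQuot L' w = L'
      · left
        refine ⟨hq, ?_⟩
        have hwnil : w = [] := by
          by_contra hne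
          by_cases hall : ∀ x ∈ w, x ∈ A
          · exact hNR' w hne hall hq
          · rw [hA w hall] at hq
            exact hL'ne.ne_empty hq.symm
        subst hwnil
        ext K
        simp only [hSw, hS₀, Set.mem_setOf_eq]
        constructor
        · rintro ⟨-, u, z, hu, huz, rfl⟩
          rw [List.nil_eq_append_iff] at huz
          obtain ⟨rfl, rfl⟩ := huz
          exact ⟨hu, leftQuot_nil L⟩
        · rintro ⟨h0, hK⟩
          exact ⟨by rw [hK]; exact hLne, [], [], h0, by simp, by rw [hK, leftQuot_nil]⟩
      · right
        refine ⟨?_, hq, ?_, ?_⟩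
        · by_cases hall : ∀ x ∈ w, x ∈ A
          · exact Set.mem_insert_of_mem _ ⟨w, hall, rfl⟩
          · rw [hA w hall]; exact Set.mem_insert _ _
        · rintro K ⟨⟨x, hx⟩, u, z, hu, hwz, rfl⟩
          refine ⟨z, fun a ha => hLB _ hx a (List.mem_append_left _ ha), rfl⟩
        · constructor
          · rintro ⟨-, u, z, hu, hwz, hKL⟩
            have hznil : z = [] := by
              by_contra hzne
              by_cases hall : ∀ x ∈ z, x ∈ B
              · exact hNR z hzne hall hKL.symm
              · rw [hB z hall] at hKL
                exact hLne.ne_empty hKL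
            subst hznil
            rw [List.append_nil] at hwz
            subst hwz
            show w ++ [] ∈ L'
            simpa using hu
          · intro hw0
            have hwL' : w ∈ L' := by simpa [leftQuot] using hw0
            exact ⟨hLne, w, [], hwL', by simp, (leftQuot_nil L).symm⟩
    · -- F of the pair equals the quotient
      ext x
      simp only [hF, Set.mem_union, Set.mem_sUnion]
      constructor
      · rintro (⟨e, v, he, hv, rfl⟩ | ⟨K, ⟨-, u, z, hu, hwz, rfl⟩, hx⟩)
        · exact ⟨w ++ e, v, he, hv, by simp [List.append_assoc]⟩
        · exact ⟨u, z ++ x, hu, hx, by simp [hwz, List.append_assoc]⟩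
      · rintro ⟨u, v, hu, hv, heq⟩
        rw [List.append_eq_append_iff] at heq
        rcases heq with ⟨e, hue, hxe⟩ | ⟨e, hwe, hve⟩
        · left
          exact ⟨e, v, by rw [hue] at hu; exact hu, hv, hxe⟩
        · right
          have hv' : e ++ x ∈ L := hve ▸ hv
          exact ⟨leftQuot L e, ⟨⟨x, hv'⟩, u, e, hu, hwe, rfl⟩, hv'⟩
  -- Step 2: counting
  set s₁ : Set (Set (List γ)) := insert ∅ (quotientsOn A L') \ {L'} with hs₁
  set s₂ : Set (Set (Set (List γ))) := {T | T ⊆ quotientsOn B L \ {L}} with hs₂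
  set g : Set (List γ) × Set (Set (List γ)) → Set (List γ) × Set (Set (List γ)) :=
    fun p => (p.1, if ([] : List γ) ∈ p.1 then insert L p.2 else p.2) with hg
  have hs₁fin : s₁.Finite := ((hQ'fin.insert ∅).subset Set.diff_subset)
  have hs₂fin : s₂.Finite := hQfin.diff.finite_subsets
  have hprodfin : (s₁ ×ˢ s₂).Finite := hs₁fin.prod hs₂fin
  have hPT : P ⊆ insert (L', S₀) (g '' (s₁ ×ˢ s₂)) := by
    rintro ⟨q, S⟩ hp
    rcases hp with ⟨h1, h2⟩ | ⟨h1, h2, h3, h4⟩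
    · simp only [Prod.mk.injEq] at *
      exact Set.mem_insert_iff.2 (Or.inl (by rw [h1, h2]))
    · refine Set.mem_insert_of_mem _ ⟨(q, S \ {L}), ⟨⟨h1, h2⟩, fun T hT => ⟨h3 hT.1, hT.2⟩⟩, ?_⟩
      simp only [hg]
      by_cases h0 : ([] : List γ) ∈ q
      · have hLS : L ∈ S := h4.2 h0
        simp only [if_pos h0, Prod.mk.injEq]
        exact ⟨trivial, by rw [Set.insert_diff_singleton, Set.insert_eq_self.2 hLS]⟩
      · have hLS : L ∉ S := fun h => h0 (h4.1 h)
        simp only [if_neg h0, Prod.mk.injEq]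
        exact ⟨trivial, Set.diff_singleton_eq_self hLS⟩
  have hTfin : (insert (L', S₀) (g '' (s₁ ×ˢ s₂))).Finite :=
    ((hprodfin.image g).insert _)
  have hPfin : P.Finite := hTfin.subset hPT
  -- cardinality computations
  have hcard1 : (quotientsOn (A ∪ B) (concat L' L)).ncard ≤ (F '' P).ncard :=
    Set.ncard_le_ncard hstep1 (hPfin.image F)
  have hcard2 : (F '' P).ncard ≤ P.ncard := Set.ncard_image_le hPfin
  have hcard3 : P.ncard ≤ (g '' (s₁ ×ˢ s₂)).ncard + 1 :=
    le_trans (Set.ncard_le_ncard hPT hTfin) (Set.ncard_insert_le _ _)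
  have hcard4 : (g '' (s₁ ×ˢ s₂)).ncard ≤ (s₁ ×ˢ s₂).ncard :=
    Set.ncard_image_le hprodfin
  have hcard5 : (s₁ ×ˢ s₂).ncard = s₁.ncard * s₂.ncard := by
    rw [← Nat.card_coe_set_eq, ← Nat.card_coe_set_eq, ← Nat.card_coe_set_eq,
      Nat.card_congr (Equiv.Set.prod s₁ s₂), Nat.card_prod]
  have hcard6 : s₁.ncard ≤ m := by
    have hL'mem' : L' ∈ insert ∅ (quotientsOn A L') := Set.mem_insert_of_mem _ hL'mem
    have h1 : s₁.ncard = (insert ∅ (quotientsOn A L')).ncard - 1 :=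
      Set.ncard_diff_singleton_of_mem hL'mem'
    have h2 : (insert ∅ (quotientsOn A L')).ncard ≤ (quotientsOn A L').ncard + 1 :=
      Set.ncard_insert_le _ _
    omega
  have hcard7 : s₂.ncard = 2 ^ (n - 1) := by
    rw [hs₂, ncard_subsets hQfin.diff,
      Set.ncard_diff_singleton_of_mem hLmem, hn']
  calc (quotientsOn (A ∪ B) (concat L' L)).ncard
      ≤ (s₁ ×ˢ s₂).ncard + 1 := by omega
    _ = s₁.ncard * s₂.ncard + 1 := by rw [hcard5]
    _ ≤ m * 2 ^ (n - 1) + 1 := by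
        rw [hcard7]
        exact Nat.add_le_add_right (Nat.mul_le_mul_right _ hcard6) 1
end

section
/- Let m, n ≥ 4. (i) For any non-returning languages L' of state complexity m over Σ' and L of state complexity n over Σ, the union L' ∪ L and symmetric difference L' ⊕ L, regarded as languages over Σ' ∪ Σ, have state complexity at most mn + 1; this bound is attained: κ(L'_m(a,b,c) ∪ L_n(b,a,d)) = κ(L'_m(a,b,c) ⊕ L_n(b,a,d)) = mn + 1, where L'_m(a,b,c) ⊆ {a,b,c}* and L_n(b,a,d) ⊆ {a,b,d}* (in L_n(b,a,d) the roles of a and b are exchanged and d is as in D_n), the operations taken over {a,b,c,d}. (ii) κ(L'_m(a,b,c) \ L_n(b,a)) = mn - n + 1, the difference taken over {a,b,c}. (iii) κ(L'_m(a,b) ∩ L_n(b,a)) = mn - (m + n - 2). -/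
/-- The four-letter alphabet `{a,b,c,d}`. -/
inductive ABCD : Type
  | a | b | c | d
  deriving DecidableEq

/-- Transitions of `D'_m(a,b,c)` (the letter `d` is not in its alphabet; words are
restricted to `{a,b,c}`): `a : (1,…,m-1)(0→1)`, `b : (1,2)(0→2)`,
`c : (2,…,m-1)(1→2)(0→1)`. -/
def stepM (m : ℕ) (q : ℕ) : ABCD → ℕ
  | ABCD.a => if q = m - 1 then 1 else q + 1
  | ABCD.b => if q = 0 then 2 else if q = 1 then 2 else if q = 2 then 1 else q
  | ABCD.c => if q = m - 1 then 2 else q + 1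
  | ABCD.d => q

/-- The language `L'_m(a,b,c) ⊆ {a,b,c}*`. -/
def LmABC (m : ℕ) : Set (List ABCD) :=
  {w | (∀ x ∈ w, x ≠ ABCD.d) ∧ w ∈ (DFA.mk (stepM m) 0 {m - 1} : DFA ABCD ℕ).accepts}

/-- Transitions of the dialect `D_n(b,a,d)`: the roles of `a` and `b` are exchanged
(`b : (1,…,n-1)(0→1)`, `a : (1,2)(0→2)`) and `d : (0→2)`; the letter `c` is not in its
alphabet (words are restricted to `{a,b,d}`). -/
def stepBAD (n : ℕ) (q : ℕ) : ABCD → ℕ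
  | ABCD.b => if q = n - 1 then 1 else q + 1
  | ABCD.a => if q = 0 then 2 else if q = 1 then 2 else if q = 2 then 1 else q
  | ABCD.d => if q = 0 then 2 else q
  | ABCD.c => q

/-- The language `L_n(b,a,d) ⊆ {a,b,d}*`. -/
def LnBAD (n : ℕ) : Set (List ABCD) :=
  {w | (∀ x ∈ w, x ≠ ABCD.c) ∧ w ∈ (DFA.mk (stepBAD n) 0 {n - 1} : DFA ABCD ℕ).accepts}

/-- The language `L_n(b,a) ⊆ {a,b}*` (roles of `a` and `b` exchanged). -/
def LnBA (n : ℕ) : Set (List ABCD) :=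
  {w | (∀ x ∈ w, x ≠ ABCD.c ∧ x ≠ ABCD.d) ∧
    w ∈ (DFA.mk (stepBAD n) 0 {n - 1} : DFA ABCD ℕ).accepts}

/-- The language `L'_m(a,b) ⊆ {a,b}*`. -/
def LmAB (m : ℕ) : Set (List ABCD) :=
  {w | (∀ x ∈ w, x ≠ ABCD.c ∧ x ≠ ABCD.d) ∧
    w ∈ (DFA.mk (stepM m) 0 {m - 1} : DFA ABCD ℕ).accepts}

/-!
A quotient of `op L' L` by a nonempty word `w` is `op (w⁻¹L') (w⁻¹L)`. As `L'` is non-returning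
and contained in `A*`, `w⁻¹L'` is either a quotient of `L'` other than `L'` or empty, so it takes
at most `m` values, and `w⁻¹L` at most `n`; with the initial quotient this gives `mn + 1`.

For the witnesses, the quotient by `w` is determined by the pair of states reached in `D'_m` and
`D_n`, with `none` recording that `w` has left the alphabet of that automaton. The letters `a` and
`b` permute the non-initial states of both automata, and words over `{a, b}` reach every pair of
non-initial states. Words containing `c` but not `d` only see `D'_m`, and words containing `d`
but not `c` only see `D_n`; the remaining pairs are separated by `{a, b}`-words leading them to
the final pair, since such words act injectively on non-initial states.
-/

open Set Function ABCD

section LeftQuotients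

variable {γ : Type}

theorem leftQuot_union (K L : Set (List γ)) (w : List γ) :
    leftQuot (K ∪ L) w = leftQuot K w ∪ leftQuot L w := rfl

theorem leftQuot_inter (K L : Set (List γ)) (w : List γ) :
    leftQuot (K ∩ L) w = leftQuot K w ∩ leftQuot L w := rfl

theorem leftQuot_diff (K L : Set (List γ)) (w : List γ) :
    leftQuot (K \ L) w = leftQuot K w \ leftQuot L w := rfl

theorem leftQuot_symmDiff (K L : Set (List γ)) (w : List γ) :
    leftQuot (symmDiff K L) w = symmDiff (leftQuot K w) (leftQuot L w) := by
  ext x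
  simp [leftQuot, mem_symmDiff]

theorem self_mem_quotientsOn (A : Set γ) (L : Set (List γ)) : L ∈ quotientsOn A L :=
  ⟨[], List.forall_mem_nil _, rfl⟩

theorem leftQuot_mem_of_ne_nil {A : Set γ} {L : Set (List γ)} (hL : ∀ w ∈ L, ∀ x ∈ w, x ∈ A)
    (hNR : NonReturningOn A L) {w : List γ} (hw : w ≠ []) :
    leftQuot L w ∈ insert ∅ (quotientsOn A L \ {L}) := by
  by_cases hA : ∀ x ∈ w, x ∈ A
  · exact mem_insert_of_mem _ ⟨⟨w, hA, rfl⟩, hNR w hw hA⟩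
  · push Not at hA
    obtain ⟨y, hy, hyA⟩ := hA
    exact mem_insert_iff.2 <| Or.inl <|
      eq_empty_of_forall_notMem fun x hx => hyA (hL _ hx y (List.mem_append_left x hy))

theorem ncard_insert_empty_quotientsOn_diff_le {A : Set γ} {L : Set (List γ)}
    (hfin : (quotientsOn A L).Finite) :
    (insert ∅ (quotientsOn A L \ {L})).ncard ≤ (quotientsOn A L).ncard :=
  (ncard_insert_le _ _).trans_eq (ncard_sdiff_singleton_add_one (self_mem_quotientsOn A L) hfin)

theorem ncard_quotientsOn_le_of_nonReturning {A B C : Set γ} {L' L : Set (List γ)}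
    (op : Set (List γ) → Set (List γ) → Set (List γ))
    (hop : ∀ w, leftQuot (op L' L) w = op (leftQuot L' w) (leftQuot L w))
    (hL' : ∀ w ∈ L', ∀ x ∈ w, x ∈ A) (hL : ∀ w ∈ L, ∀ x ∈ w, x ∈ B)
    (hNR' : NonReturningOn A L') (hNR : NonReturningOn B L)
    (hfin' : (quotientsOn A L').Finite) (hfin : (quotientsOn B L).Finite) :
    (quotientsOn C (op L' L)).ncard ≤ (quotientsOn A L').ncard * (quotientsOn B L).ncard + 1 := by
  set N' := insert ∅ (quotientsOn A L' \ {L'})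
  set N := insert ∅ (quotientsOn B L \ {L})
  have hN'N : (N' ×ˢ N).Finite := (hfin'.sdiff.insert ∅).prod (hfin.sdiff.insert ∅)
  have hsub : quotientsOn C (op L' L) ⊆ insert (op L' L) ((fun K => op K.1 K.2) '' N' ×ˢ N) := by
    rintro _ ⟨w, -, rfl⟩
    rcases eq_or_ne w [] with rfl | hw
    · exact mem_insert _ _
    · exact mem_insert_of_mem _ ⟨(leftQuot L' w, leftQuot L w),
        ⟨leftQuot_mem_of_ne_nil hL' hNR' hw, leftQuot_mem_of_ne_nil hL hNR hw⟩, (hop w).symm⟩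
  calc (quotientsOn C (op L' L)).ncard
      ≤ (insert (op L' L) ((fun K => op K.1 K.2) '' N' ×ˢ N)).ncard :=
        ncard_le_ncard hsub ((hN'N.image _).insert _)
    _ ≤ ((fun K => op K.1 K.2) '' N' ×ˢ N).ncard + 1 := ncard_insert_le _ _
    _ ≤ N'.ncard * N.ncard + 1 := by
        rw [← ncard_prod]
        exact Nat.add_le_add_right (ncard_image_le hN'N) 1
    _ ≤ _ := Nat.add_le_add_right (Nat.mul_le_mul
        (ncard_insert_empty_quotientsOn_diff_le hfin')
        (ncard_insert_empty_quotientsOn_diff_le hfin)) 1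

theorem card_quotientsOn_eq_card {σ : Type} {A : Set γ} {L : Set (List γ)}
    (st : List γ → σ) (Q : σ → Set (List γ)) (F : Finset σ)
    (hQ : ∀ w, (∀ x ∈ w, x ∈ A) → leftQuot L w = Q (st w))
    (hF : ∀ w, (∀ x ∈ w, x ∈ A) → st w ∈ F)
    (hreach : ∀ s ∈ F, ∃ w, (∀ x ∈ w, x ∈ A) ∧ st w = s)
    (hinj : InjOn Q F) :
    Nat.card (quotientsOn A L) = F.card := by
  have hquot : quotientsOn A L = Q '' F := by
    ext K
    constructor
    · rintro ⟨w, hw, rfl⟩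
      exact ⟨st w, hF w hw, (hQ w hw).symm⟩
    · rintro ⟨s, hs, rfl⟩
      obtain ⟨w, hw, rfl⟩ := hreach s hs
      exact ⟨w, hw, (hQ w hw).symm⟩
  rw [hquot, Nat.card_coe_set_eq, hinj.ncard_image, ncard_coe_finset]

end LeftQuotients

namespace DFA

variable {α σ : Type*}

theorem evalFrom_replicate (M : DFA α σ) (s : σ) (x : α) (k : ℕ) :
    M.evalFrom s (List.replicate k x) = (M.step · x)^[k] s := by
  induction k generalizing s with
  | zero => rfl
  | succ k ih => rw [List.replicate_succ, evalFrom_cons, ih, iterate_succ_apply]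

variable {M : DFA α σ} {A : Set α} {S T : Set σ}

theorem evalFrom_mem (h : ∀ x ∈ A, MapsTo (M.step · x) S S) {w : List α} (hw : ∀ x ∈ w, x ∈ A)
    {s : σ} (hs : s ∈ S) : M.evalFrom s w ∈ S := by
  induction w generalizing s with
  | nil => exact hs
  | cons x w ih =>
    obtain ⟨hx, hw⟩ := List.forall_mem_cons.1 hw
    exact ih hw (h x hx hs)

theorem evalFrom_mem_of_ne_nil (hTS : T ⊆ S) (h : ∀ x ∈ A, MapsTo (M.step · x) S T)
    {w : List α} (hw : ∀ x ∈ w, x ∈ A) (hne : w ≠ []) {s : σ} (hs : s ∈ S) :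
    M.evalFrom s w ∈ T := by
  obtain ⟨x, w, rfl⟩ := List.exists_cons_of_ne_nil hne
  obtain ⟨hx, hw⟩ := List.forall_mem_cons.1 hw
  exact evalFrom_mem (fun y hy => (h y hy).mono_left hTS) hw (h x hx hs)

theorem evalFrom_injOn (hmaps : ∀ x ∈ A, MapsTo (M.step · x) S S)
    (hinj : ∀ x ∈ A, InjOn (M.step · x) S) {w : List α} (hw : ∀ x ∈ w, x ∈ A) :
    InjOn (M.evalFrom · w) S := by
  induction w with
  | nil => exact injOn_id S
  | cons x w ih =>
    obtain ⟨hx, hw⟩ := List.forall_mem_cons.1 hw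
    exact (ih hw).comp (hinj x hx) (hmaps x hx)

end DFA

theorem iterate_eq_add {f : ℕ → ℕ} {N : ℕ} (hf : ∀ q < N, f q = q + 1) {p k : ℕ}
    (h : p + k ≤ N) : f^[k] p = p + k := by
  induction k with
  | zero => rfl
  | succ k ih => rw [iterate_succ_apply', ih (by omega), hf _ (by omega), Nat.add_assoc]

theorem iterate_eq_of_cycle {f : ℕ → ℕ} {N : ℕ} (hf : ∀ q < N, f q = q + 1) (hN : f N = 1)
    {p t : ℕ} (hp : p ≤ N) (ht : t ∈ Icc 1 N) : f^[N - p + t] p = t := by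
  obtain ⟨ht1, htN⟩ := ht
  rw [show N - p + t = (t - 1) + (1 + (N - p)) by omega, iterate_add_apply, iterate_add_apply,
    iterate_eq_add hf (le_of_eq (Nat.add_sub_cancel' hp)), Nat.add_sub_cancel' hp, iterate_one,
    hN, iterate_eq_add hf (by omega)]
  omega

abbrev dfaM (m : ℕ) : DFA ABCD ℕ := ⟨stepM m, 0, {m - 1}⟩

abbrev dfaN (n : ℕ) : DFA ABCD ℕ := ⟨stepBAD n, 0, {n - 1}⟩

section Letters

variable {m n : ℕ} {x : ABCD}

theorem stepM_mapsTo (hm : 3 ≤ m) (hx : x ≠ d) :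
    MapsTo (stepM m · x) (Iic (m - 1)) (Icc 1 (m - 1)) := by
  intro p hp
  simp only [mem_Iic] at hp
  simp only [mem_Icc]
  cases x <;> simp only [stepM] <;> first | exact absurd rfl hx | (split_ifs <;> omega)

theorem stepM_injOn (hx : x ≠ c ∧ x ≠ d) : InjOn (stepM m · x) (Icc 1 (m - 1)) := by
  intro p hp p' hp' h
  simp only [mem_Icc] at hp hp'
  cases x <;> simp only [stepM] at h <;>
    first | exact absurd rfl hx.1 | exact absurd rfl hx.2 | (split_ifs at h <;> omega)

theorem stepM_surjOn (hm : 3 ≤ m) (hx : x ≠ c ∧ x ≠ d) :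
    SurjOn (stepM m · x) (Icc 1 (m - 1)) (Icc 1 (m - 1)) :=
  (((finite_Icc _ _).injOn_iff_bijOn_of_mapsTo
    ((stepM_mapsTo hm hx.2).mono_left Icc_subset_Iic_self)).1 (stepM_injOn hx)).surjOn

theorem stepBAD_mapsTo (hn : 3 ≤ n) (hx : x ≠ c) :
    MapsTo (stepBAD n · x) (Iic (n - 1)) (Icc 1 (n - 1)) := by
  intro p hp
  simp only [mem_Iic] at hp
  simp only [mem_Icc]
  cases x <;> simp only [stepBAD] <;> first | exact absurd rfl hx | (split_ifs <;> omega)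

theorem stepBAD_injOn (hx : x ≠ c ∧ x ≠ d) : InjOn (stepBAD n · x) (Icc 1 (n - 1)) := by
  intro p hp p' hp' h
  simp only [mem_Icc] at hp hp'
  cases x <;> simp only [stepBAD] at h <;>
    first | exact absurd rfl hx.1 | exact absurd rfl hx.2 | (split_ifs at h <;> omega)

end Letters

section Evaluation

variable {m n : ℕ} {w : List ABCD}

theorem dfaM_evalFrom_mem (hm : 3 ≤ m) (hw : ∀ x ∈ w, x ≠ d) {p : ℕ} (hp : p ∈ Icc 1 (m - 1)) :
    (dfaM m).evalFrom p w ∈ Icc 1 (m - 1) :=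
  DFA.evalFrom_mem (A := {x | x ≠ d})
    (fun _ hx => (stepM_mapsTo hm hx).mono_left Icc_subset_Iic_self) hw hp

theorem dfaM_evalFrom_mem_of_ne_nil (hm : 3 ≤ m) (hw : ∀ x ∈ w, x ≠ d) (hne : w ≠ []) {p : ℕ}
    (hp : p ≤ m - 1) : (dfaM m).evalFrom p w ∈ Icc 1 (m - 1) :=
  DFA.evalFrom_mem_of_ne_nil (A := {x | x ≠ d}) Icc_subset_Iic_self
    (fun _ hx => stepM_mapsTo hm hx) hw hne hp

theorem dfaM_evalFrom_injOn (hm : 3 ≤ m) (hw : ∀ x ∈ w, x ≠ c ∧ x ≠ d) :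
    InjOn ((dfaM m).evalFrom · w) (Icc 1 (m - 1)) :=
  DFA.evalFrom_injOn (A := {x | x ≠ c ∧ x ≠ d})
    (fun _ hx => (stepM_mapsTo hm hx.2).mono_left Icc_subset_Iic_self)
    (fun _ hx => stepM_injOn hx) hw

theorem dfaN_evalFrom_mem (hn : 3 ≤ n) (hw : ∀ x ∈ w, x ≠ c) {q : ℕ} (hq : q ∈ Icc 1 (n - 1)) :
    (dfaN n).evalFrom q w ∈ Icc 1 (n - 1) :=
  DFA.evalFrom_mem (A := {x | x ≠ c})
    (fun _ hx => (stepBAD_mapsTo hn hx).mono_left Icc_subset_Iic_self) hw hq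

theorem dfaN_evalFrom_mem_of_ne_nil (hn : 3 ≤ n) (hw : ∀ x ∈ w, x ≠ c) (hne : w ≠ []) {q : ℕ}
    (hq : q ≤ n - 1) : (dfaN n).evalFrom q w ∈ Icc 1 (n - 1) :=
  DFA.evalFrom_mem_of_ne_nil (A := {x | x ≠ c}) Icc_subset_Iic_self
    (fun _ hx => stepBAD_mapsTo hn hx) hw hne hq

theorem dfaN_evalFrom_injOn (hn : 3 ≤ n) (hw : ∀ x ∈ w, x ≠ c ∧ x ≠ d) :
    InjOn ((dfaN n).evalFrom · w) (Icc 1 (n - 1)) :=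
  DFA.evalFrom_injOn (A := {x | x ≠ c ∧ x ≠ d})
    (fun _ hx => (stepBAD_mapsTo hn hx.1).mono_left Icc_subset_Iic_self)
    (fun _ hx => stepBAD_injOn hx) hw

theorem dfaM_evalFrom_replicate_a {p t : ℕ} (hp : p ≤ m - 1) (ht : t ∈ Icc 1 (m - 1)) :
    (dfaM m).evalFrom p (List.replicate (m - 1 - p + t) a) = t :=
  (DFA.evalFrom_replicate ..).trans
    (iterate_eq_of_cycle (fun _ hq => if_neg hq.ne) (if_pos rfl) hp ht)

theorem dfaM_evalFrom_replicate_c {p k : ℕ} (h : p + k ≤ m - 1) :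
    (dfaM m).evalFrom p (List.replicate k c) = p + k :=
  (DFA.evalFrom_replicate ..).trans (iterate_eq_add (fun _ hq => if_neg hq.ne) h)

theorem dfaN_evalFrom_replicate_b {q k : ℕ} (h : q + k ≤ n - 1) :
    (dfaN n).evalFrom q (List.replicate k b) = q + k :=
  (DFA.evalFrom_replicate ..).trans (iterate_eq_add (fun _ hq => if_neg hq.ne) h)

theorem dfaN_evalFrom_replicate_a {q : ℕ} (hq : 3 ≤ q) (k : ℕ) :
    (dfaN n).evalFrom q (List.replicate k a) = q :=
  (DFA.evalFrom_replicate ..).trans <|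
    iterate_fixed (by simp only [stepBAD]; split_ifs <;> omega) k

end Evaluation

def ABReachable (m n p q : ℕ) : Prop :=
  ∃ w : List ABCD, (∀ x ∈ w, x ≠ c ∧ x ≠ d) ∧
    (dfaM m).evalFrom 0 w = p ∧ (dfaN n).evalFrom 0 w = q

section Reachability

variable {m n : ℕ}

theorem ABReachable.step {p q : ℕ} (h : ABReachable m n p q) {x : ABCD} (hx : x ≠ c ∧ x ≠ d) :
    ABReachable m n (stepM m p x) (stepBAD n q x) := by
  obtain ⟨w, hw, hM, hN⟩ := h
  refine ⟨w ++ [x], ?_, ?_, ?_⟩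
  · exact List.forall_mem_append.2 ⟨hw, List.forall_mem_singleton.2 hx⟩
  · rw [DFA.evalFrom_append_singleton, hM]
  · rw [DFA.evalFrom_append_singleton, hN]

theorem abReachable_of_three_le (hm : 3 ≤ m) {p q : ℕ} (hp : p ∈ Icc 1 (m - 1)) (hq : 3 ≤ q)
    (hqn : q ≤ n - 1) : ABReachable m n p q := by
  have hr := dfaM_evalFrom_mem_of_ne_nil (m := m) (w := List.replicate q b) hm (by aesop)
    (by simp; omega) (Nat.zero_le _)
  refine ⟨List.replicate q b ++
    List.replicate (m - 1 - (dfaM m).evalFrom 0 (List.replicate q b) + p) a, by aesop, ?_, ?_⟩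
  · rw [DFA.evalFrom_of_append, dfaM_evalFrom_replicate_a hr.2 hp]
  · rw [DFA.evalFrom_of_append, dfaN_evalFrom_replicate_b (by omega), zero_add,
      dfaN_evalFrom_replicate_a hq]

/-- The pairs `(p, q)` with `q ≥ 3` are reached by `b^q a^k`, as `a` fixes `q` in `D_n` and
rotates `D'_m`. Since `a` and `b` permute the non-initial states of `D'_m`, applying `b` to the
pairs with `q = n - 1` gives all pairs with `q = 1`, and then `a` all pairs with `q = 2`. -/
theorem abReachable (hm : 3 ≤ m) (hn : 4 ≤ n) {p q : ℕ} (hp : p ∈ Icc 1 (m - 1))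
    (hq : q ∈ Icc 1 (n - 1)) : ABReachable m n p q := by
  have step : ∀ q' x, x ≠ c ∧ x ≠ d → (∀ p ∈ Icc 1 (m - 1), ABReachable m n p q') →
      ∀ p ∈ Icc 1 (m - 1), ABReachable m n p (stepBAD n q' x) := by
    intro q' x hx h p hp
    obtain ⟨p', hp', rfl⟩ := stepM_surjOn hm hx hp
    exact (h p' hp').step hx
  have row1 : ∀ p ∈ Icc 1 (m - 1), ABReachable m n p 1 := by
    simpa [stepBAD] using step (n - 1) b (by decide)
      fun p hp => abReachable_of_three_le hm hp (by omega) le_rfl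
  have row2 : ∀ p ∈ Icc 1 (m - 1), ABReachable m n p 2 := step 1 a (by decide) row1
  obtain ⟨hq1, hqn⟩ := hq
  rcases (by omega : q = 1 ∨ q = 2 ∨ 3 ≤ q) with rfl | rfl | hq3
  exacts [row1 p hp, row2 p hp, abReachable_of_three_le hm hp hq3 hqn]

theorem exists_ab_word_evalFrom_eq_last (hm : 3 ≤ m) (hn : 4 ≤ n) {p q : ℕ}
    (hp : p ∈ Icc 1 (m - 1)) (hq : q ∈ Icc 1 (n - 1)) :
    ∃ x : List ABCD, (∀ y ∈ x, y ≠ c ∧ y ≠ d) ∧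
      (dfaM m).evalFrom p x = m - 1 ∧ (dfaN n).evalFrom q x = n - 1 := by
  have hqn := hq.2
  have hr := dfaM_evalFrom_mem (w := List.replicate (n - 1 - q) b) hm (by aesop) hp
  refine ⟨List.replicate (n - 1 - q) b ++
    List.replicate (m - 1 - (dfaM m).evalFrom p (List.replicate (n - 1 - q) b) + (m - 1)) a,
    by aesop, ?_, ?_⟩
  · rw [DFA.evalFrom_of_append, dfaM_evalFrom_replicate_a hr.2 ⟨by omega, le_rfl⟩]
  · rw [DFA.evalFrom_of_append, dfaN_evalFrom_replicate_b (by omega),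
      dfaN_evalFrom_replicate_a (by omega), Nat.add_sub_cancel' hqn]

end Reachability

section SeparatingWords

variable {m n : ℕ}

theorem stepM_c_eq_last_iff (hm : 4 ≤ m) {v : ℕ} (hv : v ≤ m - 1) :
    stepM m v c = m - 1 ↔ v = m - 2 := by
  simp only [stepM]
  split_ifs <;> omega

theorem stepBAD_d_of_pos {v : ℕ} (hv : 1 ≤ v) : stepBAD n v d = v :=
  if_neg (by omega)

theorem exists_c_word_evalFrom_eq_last_iff (hm : 4 ≤ m) {s : ℕ} (hs : s ∈ Icc 1 (m - 1)) :
    ∃ x : List ABCD, c ∈ x ∧ (∀ y ∈ x, y ≠ d) ∧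
      ∀ s' ∈ Icc 1 (m - 1), (dfaM m).evalFrom s' x = m - 1 ↔ s' = s := by
  have hab : ∀ y ∈ List.replicate (m - 1 - s + (m - 2)) a, y ≠ c ∧ y ≠ d := by aesop
  refine ⟨List.replicate (m - 1 - s + (m - 2)) a ++ [c], by simp, by aesop, fun s' hs' => ?_⟩
  have hlive := dfaM_evalFrom_mem (by omega) (fun y hy => (hab y hy).2) hs'
  rw [DFA.evalFrom_append_singleton]
  refine (stepM_c_eq_last_iff hm hlive.2).trans ?_
  rw [← (dfaM_evalFrom_injOn (by omega) hab).eq_iff hs' hs,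
    dfaM_evalFrom_replicate_a hs.2 ⟨by omega, by omega⟩]

theorem exists_c_word_evalFrom_eq_last_iff_step_a (hm : 4 ≤ m) {p : ℕ} (hp : p ≤ m - 1) :
    ∃ x : List ABCD, c ∈ x ∧ (∀ y ∈ x, y ≠ d) ∧
      ∀ p' ≤ m - 1, (dfaM m).evalFrom p' x = m - 1 ↔ stepM m p' a = stepM m p a := by
  obtain ⟨x, hc, hd, hx⟩ :=
    exists_c_word_evalFrom_eq_last_iff hm (stepM_mapsTo (x := a) (by omega) (by decide) hp)
  exact ⟨a :: x, List.mem_cons_of_mem _ hc, List.forall_mem_cons.2 ⟨by decide, hd⟩,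
    fun p' hp' => hx _ (stepM_mapsTo (x := a) (by omega) (by decide) hp')⟩

/-- The letter `a` identifies only the states `0` and `m - 1` of `D'_m`; these two are told apart
by `c^(m-2)`, which fixes `m - 1` and moves `0` to `m - 2`. -/
theorem exists_c_word_separating (hm : 4 ≤ m) {p p' : ℕ} (hp : p ≤ m - 1) (hp' : p' ≤ m - 1)
    (hne : p ≠ p') : ∃ x : List ABCD, c ∈ x ∧ (∀ y ∈ x, y ≠ d) ∧
      ¬((dfaM m).evalFrom p x = m - 1 ↔ (dfaM m).evalFrom p' x = m - 1) := by
  by_cases ha : stepM m p a = stepM m p' a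
  · have hc0 : (dfaM m).evalFrom 0 (List.replicate (m - 2) c) = m - 2 :=
      (dfaM_evalFrom_replicate_c (by omega)).trans (zero_add _)
    have hcm : (dfaM m).evalFrom (m - 1) (List.replicate (m - 2) c) = m - 1 := by
      rw [show m - 2 = m - 3 + 1 by omega, List.replicate_succ, DFA.evalFrom_cons,
        show (dfaM m).step (m - 1) c = 2 from if_pos rfl, dfaM_evalFrom_replicate_c (by omega)]
      omega
    refine ⟨List.replicate (m - 2) c, List.mem_replicate.2 ⟨by omega, rfl⟩, by aesop, ?_⟩
    have h0 : p = 0 ∧ p' = m - 1 ∨ p = m - 1 ∧ p' = 0 := by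
      simp only [stepM] at ha
      split_ifs at ha <;> omega
    rcases h0 with ⟨rfl, rfl⟩ | ⟨rfl, rfl⟩
    · rw [hc0, hcm]; omega
    · rw [hc0, hcm]; omega
  · obtain ⟨x, hc, hd, hx⟩ := exists_c_word_evalFrom_eq_last_iff_step_a hm hp
    exact ⟨x, hc, hd, by rw [hx p hp, hx p' hp']; exact fun h => ha (h.1 rfl).symm⟩

theorem exists_d_word_evalFrom_eq_last_iff (hn : 3 ≤ n) {q : ℕ} (hq : q ∈ Icc 1 (n - 1)) :
    ∃ x : List ABCD, d ∈ x ∧ (∀ y ∈ x, y ≠ c) ∧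
      ∀ q' ∈ Icc 1 (n - 1), (dfaN n).evalFrom q' x = n - 1 ↔ q' = q := by
  have hb : ∀ y ∈ List.replicate (n - 1 - q) b, y ≠ c ∧ y ≠ d := by aesop
  refine ⟨List.replicate (n - 1 - q) b ++ [d], by simp, by aesop, fun q' hq' => ?_⟩
  have hlive := dfaN_evalFrom_mem hn (fun y hy => (hb y hy).1) hq'
  rw [DFA.evalFrom_append_singleton]
  change stepBAD n _ d = n - 1 ↔ q' = q
  rw [stepBAD_d_of_pos hlive.1, ← (dfaN_evalFrom_injOn hn hb).eq_iff hq' hq,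
    dfaN_evalFrom_replicate_b (le_of_eq (Nat.add_sub_cancel' hq.2)), Nat.add_sub_cancel' hq.2]

end SeparatingWords

theorem injOn_of_none_eq_empty {σ α : Type*} {f : Option σ → Set α} (hnone : f none = ∅)
    {S : Set σ} (hne : ∀ p ∈ S, (f (some p)).Nonempty) (hinj : InjOn (f ∘ some) S) :
    InjOn f {s | ∀ p ∈ s, p ∈ S} := by
  rintro (_ | p) hs (_ | p') hs' h
  · rfl
  · obtain ⟨x, hx⟩ := hne p' (hs' p' rfl)
    rw [← h, hnone] at hx
    exact hx.elim
  · obtain ⟨x, hx⟩ := hne p (hs p rfl)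
    rw [h, hnone] at hx
    exact hx.elim
  · exact congrArg some (hinj (hs p rfl) (hs' p' rfl) h)

/-- `none` stands for the empty quotient, reached as soon as `w` leaves the alphabet `{a, b, c}`. -/
def stateM (m : ℕ) (w : List ABCD) : Option ℕ :=
  if ∀ x ∈ w, x ≠ d then some ((dfaM m).evalFrom 0 w) else none

def quotM (m : ℕ) : Option ℕ → Set (List ABCD)
  | none => ∅
  | some p => {x | (∀ y ∈ x, y ≠ d) ∧ (dfaM m).evalFrom p x = m - 1}

def stateN (n : ℕ) (w : List ABCD) : Option ℕ :=
  if ∀ x ∈ w, x ≠ c then some ((dfaN n).evalFrom 0 w) else none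

def quotN (n : ℕ) : Option ℕ → Set (List ABCD)
  | none => ∅
  | some q => {x | (∀ y ∈ x, y ≠ c) ∧ (dfaN n).evalFrom q x = n - 1}

section Quotients

variable {m n : ℕ}

theorem leftQuot_LmABC (m : ℕ) (w : List ABCD) : leftQuot (LmABC m) w = quotM m (stateM m w) := by
  ext x
  change ((∀ y ∈ w ++ x, y ≠ d) ∧ (dfaM m).evalFrom 0 (w ++ x) = m - 1) ↔ _
  rw [List.forall_mem_append, DFA.evalFrom_of_append, stateM]
  split_ifs with hw
  · exact ⟨fun ⟨⟨_, hx⟩, he⟩ => ⟨hx, he⟩, fun ⟨hx, he⟩ => ⟨⟨hw, hx⟩, he⟩⟩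
  · exact iff_of_false (fun h => hw h.1.1) id

theorem leftQuot_LnBAD (n : ℕ) (w : List ABCD) : leftQuot (LnBAD n) w = quotN n (stateN n w) := by
  ext x
  change ((∀ y ∈ w ++ x, y ≠ c) ∧ (dfaN n).evalFrom 0 (w ++ x) = n - 1) ↔ _
  rw [List.forall_mem_append, DFA.evalFrom_of_append, stateN]
  split_ifs with hw
  · exact ⟨fun ⟨⟨_, hx⟩, he⟩ => ⟨hx, he⟩, fun ⟨hx, he⟩ => ⟨⟨hw, hx⟩, he⟩⟩
  · exact iff_of_false (fun h => hw h.1.1) id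

theorem LmABC_diff_LnBA (m n : ℕ) : LmABC m \ LnBA n = LmABC m \ LnBAD n := by
  ext w
  simp only [LmABC, LnBA, LnBAD, mem_sdiff, mem_ofPred_eq, forall_and]
  tauto

theorem LmAB_inter_LnBA (m n : ℕ) : LmAB m ∩ LnBA n = LmABC m ∩ LnBAD n := by
  ext w
  simp only [LmAB, LmABC, LnBA, LnBAD, mem_inter_iff, mem_ofPred_eq, forall_and]
  tauto

theorem quotN_inter_c (t : Option ℕ) : quotN n t ∩ {x | c ∈ x} = ∅ := by
  cases t with
  | none => exact empty_inter _
  | some q => exact eq_empty_of_forall_notMem fun x ⟨⟨hx, _⟩, hc⟩ => hx c hc rfl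

theorem quotM_inter_d (s : Option ℕ) : quotM m s ∩ {x | d ∈ x} = ∅ := by
  cases s with
  | none => exact empty_inter _
  | some p => exact eq_empty_of_forall_notMem fun x ⟨⟨hx, _⟩, hd⟩ => hx d hd rfl

theorem quotM_inter_injOn (hm : 4 ≤ m) :
    InjOn (fun s => quotM m s ∩ {x | c ∈ x}) {s | ∀ p ∈ s, p ∈ Iic (m - 1)} := by
  refine injOn_of_none_eq_empty (empty_inter _) (fun p hp => ?_) (fun p hp p' hp' h => ?_)
  · obtain ⟨x, hc, hd, hx⟩ := exists_c_word_evalFrom_eq_last_iff_step_a hm hp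
    exact ⟨x, ⟨hd, (hx p hp).2 rfl⟩, hc⟩
  · by_contra hne
    obtain ⟨x, hc, hd, hx⟩ := exists_c_word_separating hm hp hp' hne
    have hmem : ∀ p, x ∈ quotM m (some p) ∩ {x | c ∈ x} ↔ (dfaM m).evalFrom p x = m - 1 :=
      fun p => ⟨fun h => h.1.2, fun h => ⟨⟨hd, h⟩, hc⟩⟩
    exact hx ((hmem p).symm.trans ((Set.ext_iff.1 h x).trans (hmem p')))

theorem quotN_inter_injOn (hn : 3 ≤ n) :
    InjOn (fun t => quotN n t ∩ {x | d ∈ x}) {t | ∀ q ∈ t, q ∈ Icc 1 (n - 1)} := by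
  refine injOn_of_none_eq_empty (empty_inter _) (fun q hq => ?_) (fun q hq q' hq' h => ?_)
  · obtain ⟨x, hd, hc, hx⟩ := exists_d_word_evalFrom_eq_last_iff hn hq
    exact ⟨x, ⟨hc, (hx q hq).2 rfl⟩, hd⟩
  · obtain ⟨x, hd, hc, hx⟩ := exists_d_word_evalFrom_eq_last_iff hn hq
    have hq'x : x ∈ quotN n (some q') ∩ {x | d ∈ x} :=
      Set.ext_iff.1 h x |>.1 ⟨⟨hc, (hx q hq).2 rfl⟩, hd⟩
    exact ((hx q' hq').1 hq'x.1.2).symm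

end Quotients

def pairStates (S T : Finset (Option ℕ)) : Finset (Option ℕ × Option ℕ) :=
  insert (some 0, some 0) (S ×ˢ T)

section PairStates

variable {S T : Finset (Option ℕ)}

theorem card_pairStates (hS : some 0 ∉ S) : (pairStates S T).card = S.card * T.card + 1 := by
  rw [pairStates, Finset.card_insert_of_notMem fun h => hS (Finset.mem_product.1 h).1,
    Finset.card_product]

theorem fst_le_of_mem_pairStates {k : ℕ} (hS : ∀ s ∈ S, ∀ p ∈ s, p ≤ k)
    {u : Option ℕ × Option ℕ} (hu : u ∈ pairStates S T) : ∀ p ∈ u.1, p ≤ k := by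
  rcases Finset.mem_insert.1 hu with rfl | hu
  · rintro p ⟨⟩
    exact Nat.zero_le k
  · exact hS _ (Finset.mem_product.1 hu).1

theorem injOn_pairStates {β : Type*} {Q : Option ℕ × Option ℕ → β} (hS : some 0 ∉ S)
    (hfst : ∀ u ∈ pairStates S T, ∀ v ∈ pairStates S T, Q u = Q v → u.1 = v.1)
    (hsnd : ∀ s ∈ S, InjOn (fun t => Q (s, t)) T) : InjOn Q (pairStates S T) := by
  have hprod : ∀ u ∈ pairStates S T, u.1 ≠ some 0 → u.1 ∈ S ∧ u.2 ∈ T := fun u hu h0 =>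
    Finset.mem_product.1 <| (Finset.mem_insert.1 hu).resolve_left fun h => h0 (by rw [h])
  have hzero : ∀ u ∈ pairStates S T, u.1 = some 0 → u = (some 0, some 0) := fun u hu h0 =>
    (Finset.mem_insert.1 hu).resolve_right fun h => hS (h0 ▸ (Finset.mem_product.1 h).1)
  intro u hu v hv h
  have h1 := hfst u hu v hv h
  by_cases h0 : u.1 = some 0
  · rw [hzero u hu h0, hzero v hv (h1 ▸ h0)]
  · obtain ⟨hu1, hu2⟩ := hprod u hu h0
    obtain ⟨-, hv2⟩ := hprod v hv (h1 ▸ h0)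
    obtain ⟨s, t⟩ := u
    obtain ⟨s', t'⟩ := v
    obtain rfl : s = s' := h1
    exact congrArg (s, ·) (hsnd s hu1 hu2 hv2 h)

end PairStates

section States

variable {m n : ℕ}

theorem mem_Icc_of_mem_insertNone {k : ℕ} {s : Option ℕ}
    (hs : s ∈ Finset.insertNone (Finset.Icc 1 k)) : ∀ p ∈ s, p ∈ Icc 1 k :=
  fun p hp => Finset.mem_Icc.1 (Finset.mem_insertNone.1 hs p hp)

theorem mem_Icc_of_mem_map_some {k : ℕ} {s : Option ℕ}
    (hs : s ∈ (Finset.Icc 1 k).map Embedding.some) : ∀ p ∈ s, p ∈ Icc 1 k := by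
  rintro p rfl
  exact Finset.mem_Icc.1 ((Finset.mem_map' _).1 hs)

theorem ABReachable.exists_state_eq {p q : ℕ} (h : ABReachable m n p q) :
    ∃ w : List ABCD, (∀ x ∈ w, x ≠ c ∧ x ≠ d) ∧ (stateM m w, stateN n w) = (some p, some q) := by
  obtain ⟨w, hw, hM, hN⟩ := h
  refine ⟨w, hw, ?_⟩
  rw [stateM, stateN, if_pos fun x hx => (hw x hx).2, if_pos fun x hx => (hw x hx).1, hM, hN]

theorem ABReachable.exists_state_eq_none_some {p q : ℕ} (h : ABReachable m n p q) (hq : 1 ≤ q) :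
    ∃ w : List ABCD, (stateM m w, stateN n w) = (none, some q) := by
  obtain ⟨w, hw, -, hN⟩ := h
  have hwd : d ∈ w ++ [d] := List.mem_append_right _ (List.mem_singleton_self d)
  refine ⟨w ++ [d], ?_⟩
  rw [stateM, stateN, if_neg fun h => h d hwd rfl,
    if_pos (List.forall_mem_append.2 ⟨fun x hx => (hw x hx).1, by decide⟩),
    DFA.evalFrom_append_singleton, hN]
  exact congrArg (fun r => (none, some r)) (stepBAD_d_of_pos (n := n) hq)

theorem state_replicate_c {p : ℕ} (hp : p ∈ Icc 1 (m - 1)) :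
    (stateM m (List.replicate p c), stateN n (List.replicate p c)) = (some p, none) := by
  have hc : c ∈ List.replicate p c := List.mem_replicate.2 ⟨by have := hp.1; omega, rfl⟩
  rw [stateM, stateN, if_pos (by aesop), if_neg fun h => h c hc rfl,
    dfaM_evalFrom_replicate_c (by simpa using hp.2), zero_add]

theorem stateM_mem_insertNone (hm : 3 ≤ m) {w : List ABCD} (hw : w ≠ []) :
    stateM m w ∈ Finset.insertNone (Finset.Icc 1 (m - 1)) := by
  unfold stateM
  split_ifs with hd
  · exact Finset.some_mem_insertNone.2
      (Finset.mem_Icc.2 (dfaM_evalFrom_mem_of_ne_nil hm hd hw (Nat.zero_le _)))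
  · exact Finset.none_mem_insertNone

theorem stateN_mem_insertNone (hn : 3 ≤ n) {w : List ABCD} (hw : w ≠ []) :
    stateN n w ∈ Finset.insertNone (Finset.Icc 1 (n - 1)) := by
  unfold stateN
  split_ifs with hc
  · exact Finset.some_mem_insertNone.2
      (Finset.mem_Icc.2 (dfaN_evalFrom_mem_of_ne_nil hn hc hw (Nat.zero_le _)))
  · exact Finset.none_mem_insertNone

theorem stateM_mem_map_some (hm : 3 ≤ m) {w : List ABCD} (hd : ∀ x ∈ w, x ≠ d) (hw : w ≠ []) :
    stateM m w ∈ (Finset.Icc 1 (m - 1)).map Embedding.some := by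
  rw [stateM, if_pos hd]
  exact Finset.mem_map_of_mem _
    (Finset.mem_Icc.2 (dfaM_evalFrom_mem_of_ne_nil hm hd hw (Nat.zero_le _)))

theorem stateN_mem_map_some (hn : 3 ≤ n) {w : List ABCD} (hc : ∀ x ∈ w, x ≠ c) (hw : w ≠ []) :
    stateN n w ∈ (Finset.Icc 1 (n - 1)).map Embedding.some := by
  rw [stateN, if_pos hc]
  exact Finset.mem_map_of_mem _
    (Finset.mem_Icc.2 (dfaN_evalFrom_mem_of_ne_nil hn hc hw (Nat.zero_le _)))

end States

section Injectivity

variable {m n : ℕ}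

theorem fst_eq_of_op_quot_eq (hm : 4 ≤ m)
    {op : Set (List ABCD) → Set (List ABCD) → Set (List ABCD)}
    (hC : ∀ X Y, Y ∩ {x | c ∈ x} = ∅ → op X Y ∩ {x | c ∈ x} = X ∩ {x | c ∈ x})
    {u v : Option ℕ × Option ℕ} (hu : ∀ p ∈ u.1, p ≤ m - 1) (hv : ∀ p ∈ v.1, p ≤ m - 1)
    (h : op (quotM m u.1) (quotN n u.2) = op (quotM m v.1) (quotN n v.2)) : u.1 = v.1 :=
  quotM_inter_injOn hm hu hv <| by
    simpa only [hC _ _ (quotN_inter_c _)] using congrArg (· ∩ {x | c ∈ x}) h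

theorem quotM_diff_quotN_injOn (hm : 3 ≤ m) (hn : 4 ≤ n) {p : ℕ} (hp : p ∈ Icc 1 (m - 1)) :
    InjOn (fun t => quotM m (some p) \ quotN n t) {t | ∀ q ∈ t, q ∈ Icc 1 (n - 1)} := by
  have key : ∀ t ∈ {t : Option ℕ | ∀ q ∈ t, q ∈ Icc 1 (n - 1)},
      ∀ t' ∈ {t : Option ℕ | ∀ q ∈ t, q ∈ Icc 1 (n - 1)},
      quotM m (some p) \ quotN n t = quotM m (some p) \ quotN n t' → ∀ q ∈ t, q ∈ t' := by
    intro t ht t' ht' h q hq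
    obtain ⟨x, hx, hxM, hxN⟩ := exists_ab_word_evalFrom_eq_last hm hn hp (ht q hq)
    have hxt : x ∈ quotN n t := by
      rw [Option.mem_def.1 hq]
      exact ⟨fun y hy => (hx y hy).1, hxN⟩
    have hxt' : x ∈ quotN n t' := by
      by_contra hxt'
      exact ((Set.ext_iff.1 h x).2 ⟨⟨fun y hy => (hx y hy).2, hxM⟩, hxt'⟩).2 hxt
    rcases t' with _ | q'
    · exact hxt'.elim
    · exact congrArg some
        (dfaN_evalFrom_injOn (by omega) hx (ht' q' rfl) (ht q hq) (hxt'.2.trans hxN.symm))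
  intro t ht t' ht' h
  exact Option.ext fun q => ⟨key t ht t' ht' h q, key t' ht' t ht h.symm q⟩

theorem eq_of_quotM_inter_quotN_eq (hm : 3 ≤ m) (hn : 4 ≤ n) {p p' q q' : ℕ}
    (hp : p ∈ Icc 1 (m - 1)) (hp' : p' ∈ Icc 1 (m - 1)) (hq : q ∈ Icc 1 (n - 1))
    (hq' : q' ∈ Icc 1 (n - 1))
    (h : quotM m (some p) ∩ quotN n (some q) = quotM m (some p') ∩ quotN n (some q')) :
    p = p' ∧ q = q' := by
  obtain ⟨x, hx, hxM, hxN⟩ := exists_ab_word_evalFrom_eq_last hm hn hp hq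
  have hx' : x ∈ quotM m (some p') ∩ quotN n (some q') := (Set.ext_iff.1 h x).1
    ⟨⟨fun y hy => (hx y hy).2, hxM⟩, ⟨fun y hy => (hx y hy).1, hxN⟩⟩
  exact ⟨dfaM_evalFrom_injOn hm hx hp hp' (hxM.trans hx'.1.2.symm),
    dfaN_evalFrom_injOn (by omega) hx hq hq' (hxN.trans hx'.2.2.symm)⟩

/-- In `D'_m` the initial state `0` acts like `m - 1` under `a` and like `1` under `b`, so a word
`x z` from the initial pair to the final pair, with `x ∈ {a, b}`, forces `p = m - 1` when `x = a`
and `p = 1` when `x = b`. -/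
theorem quotM_inter_quotN_ne_zero (hm : 3 ≤ m) (hn : 4 ≤ n) {p : ℕ} (hp : p ∈ Icc 1 (m - 1))
    (t : Option ℕ) :
    quotM m (some p) ∩ quotN n t ≠ quotM m (some 0) ∩ quotN n (some 0) := by
  intro h
  have key : ∀ x, x ≠ c ∧ x ≠ d → stepM m p x = stepM m 0 x := by
    intro x hx
    have h0M := stepM_mapsTo hm hx.2 (Nat.zero_le (m - 1))
    obtain ⟨z, hz, hzM, hzN⟩ := exists_ab_word_evalFrom_eq_last hm hn h0M
      (stepBAD_mapsTo (by omega) hx.1 (Nat.zero_le (n - 1)))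
    have hxz : x :: z ∈ quotM m (some 0) ∩ quotN n (some 0) :=
      ⟨⟨List.forall_mem_cons.2 ⟨hx.2, fun y hy => (hz y hy).2⟩, hzM⟩,
        ⟨List.forall_mem_cons.2 ⟨hx.1, fun y hy => (hz y hy).1⟩, hzN⟩⟩
    rw [← h] at hxz
    exact dfaM_evalFrom_injOn hm hz (stepM_mapsTo hm hx.2 hp.2) h0M (hxz.1.2.trans hzM.symm)
  have ha := key a (by decide)
  have hb := key b (by decide)
  simp only [stepM] at ha hb
  obtain ⟨hp1, hpm⟩ := hp
  split_ifs at ha hb <;> omega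

end Injectivity

def unionStates (m n : ℕ) : Finset (Option ℕ × Option ℕ) :=
  pairStates (Finset.insertNone (Finset.Icc 1 (m - 1))) (Finset.insertNone (Finset.Icc 1 (n - 1)))

def diffStates (m n : ℕ) : Finset (Option ℕ × Option ℕ) :=
  pairStates ((Finset.Icc 1 (m - 1)).map Embedding.some) (Finset.insertNone (Finset.Icc 1 (n - 1)))

def interStates (m n : ℕ) : Finset (Option ℕ × Option ℕ) :=
  pairStates ((Finset.Icc 1 (m - 1)).map Embedding.some)
    ((Finset.Icc 1 (n - 1)).map Embedding.some)

section UnionStates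

variable {m n : ℕ}

theorem card_unionStates (hm : 1 ≤ m) (hn : 1 ≤ n) : (unionStates m n).card = m * n + 1 := by
  rw [unionStates, card_pairStates (by simp), Finset.card_insertNone, Finset.card_insertNone,
    Nat.card_Icc, Nat.card_Icc, show m - 1 + 1 - 1 + 1 = m by omega,
    show n - 1 + 1 - 1 + 1 = n by omega]

theorem state_mem_unionStates (hm : 3 ≤ m) (hn : 3 ≤ n) (w : List ABCD) :
    (stateM m w, stateN n w) ∈ unionStates m n := by
  rcases eq_or_ne w [] with rfl | hw
  · exact Finset.mem_insert_self _ _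
  · exact Finset.mem_insert_of_mem
      (Finset.mem_product.2 ⟨stateM_mem_insertNone hm hw, stateN_mem_insertNone hn hw⟩)

theorem exists_state_eq_of_mem_unionStates (hm : 3 ≤ m) (hn : 4 ≤ n) {u : Option ℕ × Option ℕ}
    (hu : u ∈ unionStates m n) : ∃ w : List ABCD, (stateM m w, stateN n w) = u := by
  rcases Finset.mem_insert.1 hu with rfl | hu
  · exact ⟨[], rfl⟩
  obtain ⟨hs, ht⟩ := Finset.mem_product.1 hu
  obtain ⟨_ | p, _ | q⟩ := u
  · exact ⟨[c, d], rfl⟩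
  · have hq := mem_Icc_of_mem_insertNone ht q rfl
    exact (abReachable (m := m) hm hn ⟨le_rfl, by omega⟩ hq).exists_state_eq_none_some hq.1
  · exact ⟨_, state_replicate_c (mem_Icc_of_mem_insertNone hs p rfl)⟩
  · obtain ⟨w, -, hw⟩ := (abReachable hm hn (mem_Icc_of_mem_insertNone hs p rfl)
      (mem_Icc_of_mem_insertNone ht q rfl)).exists_state_eq
    exact ⟨w, hw⟩

theorem injOn_unionStates (hm : 4 ≤ m) (hn : 3 ≤ n)
    {op : Set (List ABCD) → Set (List ABCD) → Set (List ABCD)}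
    (hC : ∀ X Y, Y ∩ {x | c ∈ x} = ∅ → op X Y ∩ {x | c ∈ x} = X ∩ {x | c ∈ x})
    (hD : ∀ X Y, X ∩ {x | d ∈ x} = ∅ → op X Y ∩ {x | d ∈ x} = Y ∩ {x | d ∈ x}) :
    InjOn (fun u : Option ℕ × Option ℕ => op (quotM m u.1) (quotN n u.2)) (unionStates m n) := by
  have hle : ∀ s ∈ Finset.insertNone (Finset.Icc 1 (m - 1)), ∀ p ∈ s, p ≤ m - 1 :=
    fun s hs p hp => (mem_Icc_of_mem_insertNone hs p hp).2
  refine injOn_pairStates (by simp) (fun u hu v hv h => fst_eq_of_op_quot_eq hm hC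
    (fst_le_of_mem_pairStates hle hu) (fst_le_of_mem_pairStates hle hv) h)
    (fun s _ t ht t' ht' h => quotN_inter_injOn hn (mem_Icc_of_mem_insertNone ht)
      (mem_Icc_of_mem_insertNone ht') ?_)
  simpa only [hD _ _ (quotM_inter_d _)] using congrArg (· ∩ {x | d ∈ x}) h

end UnionStates

section DiffStates

variable {m n : ℕ}

theorem card_diffStates (hn : 1 ≤ n) : (diffStates m n).card = m * n - n + 1 := by
  rw [diffStates, card_pairStates (by simp), Finset.card_map, Finset.card_insertNone,
    Nat.card_Icc, Nat.card_Icc, Nat.add_sub_cancel, show n - 1 + 1 - 1 + 1 = n by omega,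
    Nat.sub_one_mul]

theorem state_mem_diffStates (hm : 3 ≤ m) (hn : 3 ≤ n) {w : List ABCD}
    (hw : ∀ x ∈ w, x ≠ d) : (stateM m w, stateN n w) ∈ diffStates m n := by
  rcases eq_or_ne w [] with rfl | hne
  · exact Finset.mem_insert_self _ _
  · exact Finset.mem_insert_of_mem
      (Finset.mem_product.2 ⟨stateM_mem_map_some hm hw hne, stateN_mem_insertNone hn hne⟩)

theorem exists_state_eq_of_mem_diffStates (hm : 3 ≤ m) (hn : 4 ≤ n) {u : Option ℕ × Option ℕ}
    (hu : u ∈ diffStates m n) :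
    ∃ w : List ABCD, (∀ x ∈ w, x ≠ d) ∧ (stateM m w, stateN n w) = u := by
  rcases Finset.mem_insert.1 hu with rfl | hu
  · exact ⟨[], List.forall_mem_nil _, rfl⟩
  obtain ⟨hs, ht⟩ := Finset.mem_product.1 hu
  obtain ⟨s, _ | q⟩ := u
  all_goals obtain ⟨p, -, rfl⟩ := Finset.mem_map.1 hs
  · exact ⟨List.replicate p c, by aesop, state_replicate_c (mem_Icc_of_mem_map_some hs p rfl)⟩
  · obtain ⟨w, hw, hst⟩ := (abReachable hm hn (mem_Icc_of_mem_map_some hs p rfl)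
      (mem_Icc_of_mem_insertNone ht q rfl)).exists_state_eq
    exact ⟨w, fun x hx => (hw x hx).2, hst⟩

theorem injOn_diffStates (hm : 4 ≤ m) (hn : 4 ≤ n) :
    InjOn (fun u : Option ℕ × Option ℕ => quotM m u.1 \ quotN n u.2) (diffStates m n) := by
  have hle : ∀ s ∈ (Finset.Icc 1 (m - 1)).map Embedding.some, ∀ p ∈ s, p ≤ m - 1 :=
    fun s hs p hp => (mem_Icc_of_mem_map_some hs p hp).2
  refine injOn_pairStates (by simp) (fun u hu v hv h => fst_eq_of_op_quot_eq hm
    (fun X Y h => by rw [inter_sdiff_distrib_right, h, sdiff_empty])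
    (fst_le_of_mem_pairStates hle hu) (fst_le_of_mem_pairStates hle hv) h)
    (fun s hs t ht t' ht' h => ?_)
  obtain ⟨p, -, rfl⟩ := Finset.mem_map.1 hs
  exact quotM_diff_quotN_injOn (by omega) hn (mem_Icc_of_mem_map_some hs p rfl)
    (mem_Icc_of_mem_insertNone ht) (mem_Icc_of_mem_insertNone ht') h

end DiffStates

section InterStates

variable {m n : ℕ}

theorem card_interStates (hm : 1 ≤ m) (hn : 1 ≤ n) :
    (interStates m n).card = m * n - (m + n - 2) := by
  rw [interStates, card_pairStates (by simp), Finset.card_map, Finset.card_map, Nat.card_Icc,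
    Nat.card_Icc]
  obtain ⟨m, rfl⟩ := Nat.exists_eq_add_of_le' hm
  obtain ⟨n, rfl⟩ := Nat.exists_eq_add_of_le' hn
  simp only [Nat.add_sub_cancel, Nat.add_mul, Nat.mul_add]
  omega

theorem state_mem_interStates (hm : 3 ≤ m) (hn : 3 ≤ n) {w : List ABCD}
    (hw : ∀ x ∈ w, x ≠ c ∧ x ≠ d) : (stateM m w, stateN n w) ∈ interStates m n := by
  rcases eq_or_ne w [] with rfl | hne
  · exact Finset.mem_insert_self _ _
  · exact Finset.mem_insert_of_mem (Finset.mem_product.2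
      ⟨stateM_mem_map_some hm (fun x hx => (hw x hx).2) hne,
        stateN_mem_map_some hn (fun x hx => (hw x hx).1) hne⟩)

theorem exists_state_eq_of_mem_interStates (hm : 3 ≤ m) (hn : 4 ≤ n) {u : Option ℕ × Option ℕ}
    (hu : u ∈ interStates m n) :
    ∃ w : List ABCD, (∀ x ∈ w, x ≠ c ∧ x ≠ d) ∧ (stateM m w, stateN n w) = u := by
  rcases Finset.mem_insert.1 hu with rfl | hu
  · exact ⟨[], List.forall_mem_nil _, rfl⟩
  obtain ⟨hs, ht⟩ := Finset.mem_product.1 hu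
  obtain ⟨s, t⟩ := u
  obtain ⟨p, -, rfl⟩ := Finset.mem_map.1 hs
  obtain ⟨q, -, rfl⟩ := Finset.mem_map.1 ht
  exact (abReachable hm hn (mem_Icc_of_mem_map_some hs p rfl)
    (mem_Icc_of_mem_map_some ht q rfl)).exists_state_eq

theorem injOn_interStates (hm : 3 ≤ m) (hn : 4 ≤ n) :
    InjOn (fun u : Option ℕ × Option ℕ => quotM m u.1 ∩ quotN n u.2) (interStates m n) := by
  rw [interStates, pairStates, Finset.coe_insert, injOn_insert (by simp)]
  refine ⟨?_, ?_⟩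
  · rintro ⟨s, t⟩ hst ⟨s', t'⟩ hst' h
    obtain ⟨hs, ht⟩ := Finset.mem_product.1 hst
    obtain ⟨hs', ht'⟩ := Finset.mem_product.1 hst'
    obtain ⟨p, -, rfl⟩ := Finset.mem_map.1 hs
    obtain ⟨q, -, rfl⟩ := Finset.mem_map.1 ht
    obtain ⟨p', -, rfl⟩ := Finset.mem_map.1 hs'
    obtain ⟨q', -, rfl⟩ := Finset.mem_map.1 ht'
    obtain ⟨rfl, rfl⟩ := eq_of_quotM_inter_quotN_eq hm hn (mem_Icc_of_mem_map_some hs p rfl)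
      (mem_Icc_of_mem_map_some hs' p' rfl) (mem_Icc_of_mem_map_some ht q rfl)
      (mem_Icc_of_mem_map_some ht' q' rfl) h
    rfl
  · rintro ⟨⟨s, t⟩, hst, h⟩
    obtain ⟨hs, -⟩ := Finset.mem_product.1 hst
    obtain ⟨p, -, rfl⟩ := Finset.mem_map.1 hs
    exact quotM_inter_quotN_ne_zero hm hn (mem_Icc_of_mem_map_some hs p rfl) t h

end InterStates

section Witnesses

variable {m n : ℕ}

theorem card_quotientsOn_LmABC_op_LnBAD (hm : 4 ≤ m) (hn : 4 ≤ n)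
    (op : Set (List ABCD) → Set (List ABCD) → Set (List ABCD))
    (hop : ∀ w, leftQuot (op (LmABC m) (LnBAD n)) w =
      op (leftQuot (LmABC m) w) (leftQuot (LnBAD n) w))
    (hC : ∀ X Y, Y ∩ {x | c ∈ x} = ∅ → op X Y ∩ {x | c ∈ x} = X ∩ {x | c ∈ x})
    (hD : ∀ X Y, X ∩ {x | d ∈ x} = ∅ → op X Y ∩ {x | d ∈ x} = Y ∩ {x | d ∈ x}) :
    Nat.card (quotientsOn univ (op (LmABC m) (LnBAD n))) = m * n + 1 := by
  rw [card_quotientsOn_eq_card (A := univ) (fun w => (stateM m w, stateN n w)) _ (unionStates m n)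
    (fun w _ => by rw [hop, leftQuot_LmABC, leftQuot_LnBAD])
    (fun w _ => state_mem_unionStates (by omega) (by omega) w)
    (fun u hu => (exists_state_eq_of_mem_unionStates (by omega) hn hu).imp
      fun _ hw => ⟨fun _ _ => trivial, hw⟩)
    (injOn_unionStates hm (by omega) hC hD), card_unionStates (by omega) (by omega)]

theorem card_quotientsOn_LmABC_union_LnBAD (hm : 4 ≤ m) (hn : 4 ≤ n) :
    Nat.card (quotientsOn univ (LmABC m ∪ LnBAD n)) = m * n + 1 :=
  card_quotientsOn_LmABC_op_LnBAD hm hn (· ∪ ·) (leftQuot_union _ _)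
    (fun X Y h => by rw [union_inter_distrib_right, h, union_empty])
    (fun X Y h => by rw [union_inter_distrib_right, h, empty_union])

theorem card_quotientsOn_LmABC_symmDiff_LnBAD (hm : 4 ≤ m) (hn : 4 ≤ n) :
    Nat.card (quotientsOn univ (symmDiff (LmABC m) (LnBAD n))) = m * n + 1 :=
  card_quotientsOn_LmABC_op_LnBAD hm hn symmDiff (leftQuot_symmDiff _ _)
    (fun X Y h => by rw [inter_symmDiff_distrib_right, h]; exact symmDiff_bot _)
    (fun X Y h => by rw [inter_symmDiff_distrib_right, h]; exact bot_symmDiff _)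

theorem card_quotientsOn_LmABC_diff_LnBA (hm : 4 ≤ m) (hn : 4 ≤ n) :
    Nat.card (quotientsOn {x | x ≠ d} (LmABC m \ LnBA n)) = m * n - n + 1 := by
  rw [LmABC_diff_LnBA, card_quotientsOn_eq_card (A := {x | x ≠ d})
    (fun w => (stateM m w, stateN n w)) _ (diffStates m n)
    (fun w _ => by rw [leftQuot_diff, leftQuot_LmABC, leftQuot_LnBAD])
    (fun _ hw => state_mem_diffStates (by omega) (by omega) hw)
    (fun _ hu => exists_state_eq_of_mem_diffStates (by omega) hn hu)
    (injOn_diffStates hm hn), card_diffStates (by omega)]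

theorem card_quotientsOn_LmAB_inter_LnBA (hm : 4 ≤ m) (hn : 4 ≤ n) :
    Nat.card (quotientsOn {x | x ≠ c ∧ x ≠ d} (LmAB m ∩ LnBA n)) = m * n - (m + n - 2) := by
  rw [LmAB_inter_LnBA, card_quotientsOn_eq_card (A := {x | x ≠ c ∧ x ≠ d})
    (fun w => (stateM m w, stateN n w)) _ (interStates m n)
    (fun w _ => by rw [leftQuot_inter, leftQuot_LmABC, leftQuot_LnBAD])
    (fun _ hw => state_mem_interStates (by omega) (by omega) hw)
    (fun _ hu => exists_state_eq_of_mem_interStates (by omega) hn hu)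
    (injOn_interStates (by omega) hn), card_interStates (by omega) (by omega)]

end Witnesses

/-- Unrestricted boolean operations on non-returning languages, for `m, n ≥ 4`:
(i) for any non-returning `L'` of complexity `m` over `Σ'` and `L` of complexity `n`
over `Σ`, the union and the symmetric difference, regarded as languages over `Σ' ∪ Σ`,
have state complexity at most `mn + 1`, and this bound is attained by `L'_m(a,b,c)` and
`L_n(b,a,d)` (the operations taken over `{a,b,c,d}`);
(ii) `κ(L'_m(a,b,c) ∖ L_n(b,a)) = mn - n + 1`, the difference taken over `{a,b,c}`;
(iii) `κ(L'_m(a,b) ∩ L_n(b,a)) = mn - (m + n - 2)`, the intersection taken over `{a,b}`. -/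
theorem stmt19 (m n : ℕ) (hm : 4 ≤ m) (hn : 4 ≤ n) :
    (∀ (γ : Type) (A B : Set γ) (L' L : Set (List γ)),
      (∀ w ∈ L', ∀ x ∈ w, x ∈ A) → (∀ w ∈ L, ∀ x ∈ w, x ∈ B) →
      NonReturningOn A L' → NonReturningOn B L →
      Nat.card (quotientsOn A L') = m → Nat.card (quotientsOn B L) = n →
      Nat.card (quotientsOn (A ∪ B) (L' ∪ L)) ≤ m * n + 1 ∧
      Nat.card (quotientsOn (A ∪ B) (symmDiff L' L)) ≤ m * n + 1) ∧
    Nat.card (quotientsOn Set.univ (LmABC m ∪ LnBAD n)) = m * n + 1 ∧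
    Nat.card (quotientsOn Set.univ (symmDiff (LmABC m) (LnBAD n))) = m * n + 1 ∧
    Nat.card (quotientsOn {x : ABCD | x ≠ ABCD.d} (LmABC m \ LnBA n)) = m * n - n + 1 ∧
    Nat.card (quotientsOn {x : ABCD | x ≠ ABCD.c ∧ x ≠ ABCD.d} (LmAB m ∩ LnBA n))
      = m * n - (m + n - 2) := by
  refine ⟨fun γ A B L' L hL' hL hNR' hNR hcard' hcard => ?_,
    card_quotientsOn_LmABC_union_LnBAD hm hn, card_quotientsOn_LmABC_symmDiff_LnBAD hm hn,
    card_quotientsOn_LmABC_diff_LnBA hm hn, card_quotientsOn_LmAB_inter_LnBA hm hn⟩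
  rw [Nat.card_coe_set_eq] at hcard' hcard
  have hfin' : (quotientsOn A L').Finite := finite_of_ncard_ne_zero (by omega)
  have hfin : (quotientsOn B L).Finite := finite_of_ncard_ne_zero (by omega)
  rw [Nat.card_coe_set_eq, Nat.card_coe_set_eq, ← hcard', ← hcard]
  exact ⟨ncard_quotientsOn_le_of_nonReturning (· ∪ ·) (leftQuot_union L' L) hL' hL hNR' hNR
      hfin' hfin,
    ncard_quotientsOn_le_of_nonReturning symmDiff (leftQuot_symmDiff L' L) hL' hL hNR' hNR
      hfin' hfin⟩
end
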